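/- Let Z be a set and ≤ a monomial order on the free operated monoid 𝔐(Z) whose restriction to the free monoid M(Z) ⊆ 𝔐(Z) is a monomial order on M(Z). If G ⊆ kM(Z) is a Gröbner–Shirshov basis (for associative algebras) with respect to the restriction of ≤ to M(Z), then G is also an operated Gröbner–Shirshov basis in k𝔐(Z) with respect to ≤. -/

import Mathlib

namespace OpAlg

/-- Letters of the free operated monoid `𝔐(Z)`: a letter is either a variable from `Z`
or a bracketed word `⌊w⌋`. -/
inductive OpLetter (Z : Type u) : Type u
  | var : Z → OpLetter Z
  | floor : List (OpLetter Z) → OpLetter Z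

/-- The free operated monoid `𝔐(Z)` on a set `Z`: words in variables and brackets. -/
def OpMonoid (Z : Type u) : Type u := FreeMonoid (OpLetter Z)

instance {Z : Type u} : Monoid (OpMonoid Z) :=
  inferInstanceAs (Monoid (FreeMonoid (OpLetter Z)))

/-- The variable `z` as an element of `𝔐(Z)`. -/
def OpMonoid.ofVar {Z : Type u} (z : Z) : OpMonoid Z := FreeMonoid.of (OpLetter.var z)

/-- The bracket operation `u ↦ ⌊u⌋` on `𝔐(Z)`. -/
def OpMonoid.flr {Z : Type u} (u : OpMonoid Z) : OpMonoid Z :=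
  FreeMonoid.of (OpLetter.floor (FreeMonoid.toList u))

/-- The breadth of `u ∈ 𝔐(Z)`. -/
def OpMonoid.breadth {Z : Type u} (u : OpMonoid Z) : ℕ := (FreeMonoid.toList u).length

variable {X B : Type*} [Monoid B]

mutual
  /-- Evaluation of a letter in a monoid `B` with an operator `P`, sending the
  variable `x` to `σ x`. -/
  def evalLetter (σ : X → B) (P : B → B) : OpLetter X → B
    | .var x => σ x
    | .floor w => P (evalList σ P w)
  /-- Evaluation of a list of letters (product of the letter evaluations). -/
  def evalList (σ : X → B) (P : B → B) : List (OpLetter X) → B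
    | [] => 1
    | a :: w => evalLetter σ P a * evalList σ P w
end

/-- Evaluation of a word `w ∈ 𝔐(X)` in a monoid `B` with operator `P` at `σ : X → B`. -/
def evalWord (σ : X → B) (P : B → B) (w : OpMonoid X) : B :=
  evalList σ P (FreeMonoid.toList w)

/-- Monoid-level substitution `𝔐(X) → 𝔐(Z)`, `xᵢ ↦ σ xᵢ`. -/
def substW {X Z : Type*} (σ : X → OpMonoid Z) : OpMonoid X → OpMonoid Z :=
  evalWord σ OpMonoid.flr

/-- The free unital operated algebra `k𝔐(Z)` (as a `k`-module: the monoid algebra). -/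
abbrev kOpM (k : Type*) [Field k] (Z : Type*) := MonoidAlgebra k (OpMonoid Z)

/-- The operator `P` on `k𝔐(Z)`: linear extension of `u ↦ ⌊u⌋`. -/
noncomputable def opP (k : Type*) [Field k] {Z : Type*} (f : kOpM k Z) : kOpM k Z :=
  MonoidAlgebra.ofCoeff (Finsupp.mapDomain OpMonoid.flr f.coeff)

/-- Evaluation of `φ ∈ k𝔐(X)` in a `k`-algebra `B` with operator `P` at `σ : X → B`:
`φ(σ x₁, …, σ xₙ)`. -/
noncomputable def evalPoly (k : Type*) [Field k] {X B : Type*} [Semiring B] [Module k B]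
    (σ : X → B) (P : B → B) (φ : MonoidAlgebra k (OpMonoid X)) : B :=
  φ.coeff.sum fun w c => c • evalWord σ P w

/-- A context `q ∈ 𝔐⋆(Z)` : a word in `𝔐(Z ∪ {⋆})` with exactly one occurrence of `⋆`. -/
inductive OpCtx (Z : Type u) : Type u
  | hole (u v : OpMonoid Z)
  | floor (u : OpMonoid Z) (q : OpCtx Z) (v : OpMonoid Z)

/-- Substitution `q|_w` of a word `w` for `⋆` in a context `q`. -/
def OpCtx.subst {Z : Type u} : OpCtx Z → OpMonoid Z → OpMonoid Z
  | .hole u v, w => u * w * v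
  | .floor u q v, w => u * OpMonoid.flr (q.subst w) * v

/-- Substitution `q|_f` of a polynomial `f ∈ k𝔐(Z)` for `⋆` in a context `q`. -/
noncomputable def ctxPoly (k : Type*) [Field k] {Z : Type*} (q : OpCtx Z) (f : kOpM k Z) :
    kOpM k Z :=
  MonoidAlgebra.ofCoeff (Finsupp.mapDomain q.subst f.coeff)

/-- The leading monomial of an element of a monoid algebra (the monomial `1` if the
element is a scalar or zero). -/
noncomputable def lm {k : Type*} [Field k] {G : Type*} [Monoid G] [LinearOrder G]
    (f : MonoidAlgebra k G) : G :=
  if h : f.coeff.support.Nonempty then f.coeff.support.max' h else 1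

/-- Division of an element by its leading coefficient. -/
noncomputable def monicize {k : Type*} [Field k] {G : Type*} [Monoid G] [LinearOrder G]
    (f : MonoidAlgebra k G) : MonoidAlgebra k G :=
  (f.coeff (lm f))⁻¹ • f

section GS
variable (k : Type*) [Field k] {Z : Type*} [LinearOrder (OpMonoid Z)]

/-- `f` is trivial modulo `(𝒢, w)` : `f = Σᵢ cᵢ qᵢ|_{sᵢ}` with `qᵢ|_{s̄ᵢ} < w`, `sᵢ ∈ 𝒢`. -/
def TrivialMod (𝒢 : Set (kOpM k Z)) (w : OpMonoid Z) (f : kOpM k Z) : Prop :=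
  f ∈ Submodule.span k
    {g : kOpM k Z | ∃ s ∈ 𝒢, ∃ q : OpCtx Z, g = ctxPoly k q s ∧ q.subst (lm s) < w}

/-- `𝒢 ⊆ k𝔐(Z)` is an operated Gröbner–Shirshov basis: all intersection compositions and
all inclusion compositions of (monicized) pairs of elements of `𝒢` are trivial. -/
def IsOpGS (𝒢 : Set (kOpM k Z)) : Prop :=
  (∀ f ∈ 𝒢, ∀ g ∈ 𝒢, ∀ u v w : OpMonoid Z,
      w = lm f * u → w = v * lm g →
      max (OpMonoid.breadth (lm f)) (OpMonoid.breadth (lm g)) < OpMonoid.breadth w →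
      OpMonoid.breadth w < OpMonoid.breadth (lm f) + OpMonoid.breadth (lm g) →
      TrivialMod k 𝒢 w
        (monicize f * MonoidAlgebra.single u 1 - MonoidAlgebra.single v 1 * monicize g)) ∧
  (∀ f ∈ 𝒢, ∀ g ∈ 𝒢, ∀ q : OpCtx Z, ∀ w : OpMonoid Z,
      w = lm f → w = q.subst (lm g) →
      TrivialMod k 𝒢 w (monicize f - ctxPoly k q (monicize g)))

end GS

section Assoc
variable (k : Type*) [Field k] {Z : Type*} [LinearOrder (FreeMonoid Z)]

/-- The free unital algebra `kM(Z)` (noncommutative polynomials). -/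
abbrev kM (k : Type*) [Field k] (Z : Type*) := MonoidAlgebra k (FreeMonoid Z)

/-- Triviality modulo `(G, w)` in the classical associative sense. -/
def ATrivialMod (G : Set (kM k Z)) (w : FreeMonoid Z) (f : kM k Z) : Prop :=
  f ∈ Submodule.span k
    {g : kM k Z | ∃ s ∈ G, ∃ u v : FreeMonoid Z,
      g = MonoidAlgebra.single u 1 * s * MonoidAlgebra.single v 1 ∧ u * lm s * v < w}

/-- `G ⊆ kM(Z)` is a Gröbner–Shirshov basis in the classical associative sense. -/
def IsAssocGS (G : Set (kM k Z)) : Prop :=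
  (∀ f ∈ G, ∀ g ∈ G, ∀ u v w : FreeMonoid Z,
      w = lm f * u → w = v * lm g →
      max (FreeMonoid.toList (lm f)).length (FreeMonoid.toList (lm g)).length <
        (FreeMonoid.toList w).length →
      (FreeMonoid.toList w).length <
        (FreeMonoid.toList (lm f)).length + (FreeMonoid.toList (lm g)).length →
      ATrivialMod k G w
        (monicize f * MonoidAlgebra.single u 1 - MonoidAlgebra.single v 1 * monicize g)) ∧
  (∀ f ∈ G, ∀ g ∈ G, ∀ u v w : FreeMonoid Z,
      w = lm f → w = u * lm g * v →
      ATrivialMod k G w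
        (monicize f -
          MonoidAlgebra.single u 1 * monicize g * MonoidAlgebra.single v 1))

end Assoc

/-- The embedding of the free monoid `M(Z)` into the free operated monoid `𝔐(Z)`. -/
def embW {Z : Type*} (w : FreeMonoid Z) : OpMonoid Z :=
  (FreeMonoid.map (OpLetter.var) w : FreeMonoid (OpLetter Z))

/-- The embedding `kM(Z) → k𝔐(Z)`. -/
noncomputable def embA (k : Type*) [Field k] {Z : Type*} (f : kM k Z) : kOpM k Z :=
  MonoidAlgebra.ofCoeff (Finsupp.mapDomain embW f.coeff)

end OpAlg

/-!
The leading monomials of elements of `G` lie in `M(Z)`, which sits in `𝔐(Z)` order-preservingly.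
A bracket-free word only splits into bracket-free pieces, so an operated composition of two
elements of `G` is the image of an associative composition with the same ambiguity `w`; and the
embedding carries associative triviality modulo `(G, w)` to operated triviality, since
`u s v` is the substitution of `s` into the context `u ⋆ v`.
-/

namespace OpAlg

section Words

variable {Z : Type*}

def embHom : FreeMonoid Z →* OpMonoid Z := FreeMonoid.map OpLetter.var

theorem toList_embW (w : FreeMonoid Z) :
    FreeMonoid.toList (embW w) = (FreeMonoid.toList w).map OpLetter.var := rfl

theorem embW_injective : Function.Injective (embW (Z := Z)) := fun _ _ h =>
  FreeMonoid.toList.injective <| (List.map_injective_iff.mpr fun _ _ h => by cases h; rfl)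
    (congrArg FreeMonoid.toList h)

theorem embW_mul (a b : FreeMonoid Z) : embW (a * b) = embW a * embW b :=
  map_mul embHom a b

theorem breadth_embW (w : FreeMonoid Z) :
    OpMonoid.breadth (embW w) = (FreeMonoid.toList w).length :=
  List.length_map _

@[simp]
theorem OpMonoid.toList_mul (x y : OpMonoid Z) :
    FreeMonoid.toList (x * y) = FreeMonoid.toList x ++ FreeMonoid.toList y := rfl

@[simp]
theorem OpMonoid.toList_flr (x : OpMonoid Z) :
    FreeMonoid.toList (OpMonoid.flr x) = [OpLetter.floor (FreeMonoid.toList x)] := rfl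

theorem breadth_mul (x y : OpMonoid Z) :
    OpMonoid.breadth (x * y) = OpMonoid.breadth x + OpMonoid.breadth y :=
  List.length_append

theorem exists_embW_of_embW_eq_mul {w : FreeMonoid Z} {x y : OpMonoid Z} (h : embW w = x * y) :
    ∃ x₀ y₀ : FreeMonoid Z, x = embW x₀ ∧ y = embW y₀ ∧ w = x₀ * y₀ := by
  obtain ⟨l₁, l₂, hw, hx, hy⟩ := List.map_eq_append_iff.mp (congrArg FreeMonoid.toList h)
  exact ⟨FreeMonoid.ofList l₁, FreeMonoid.ofList l₂, FreeMonoid.toList.injective hx.symm,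
    FreeMonoid.toList.injective hy.symm, FreeMonoid.toList.injective hw⟩

theorem exists_embW_of_overlap {s t : FreeMonoid Z} {u v : OpMonoid Z}
    (h : embW s * u = v * embW t)
    (hlt : OpMonoid.breadth (v * embW t) <
      OpMonoid.breadth (embW s) + OpMonoid.breadth (embW t)) :
    ∃ u₀ v₀ : FreeMonoid Z, u = embW u₀ ∧ v = embW v₀ ∧ s * u₀ = v₀ * t := by
  rcases List.append_eq_append_iff.mp (congrArg FreeMonoid.toList h) with
    ⟨a, hv, -⟩ | ⟨c, hs, ht⟩
  · have : OpMonoid.breadth v = OpMonoid.breadth (embW s) + a.length :=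
      (congrArg List.length hv).trans List.length_append
    rw [breadth_mul] at hlt
    omega
  · obtain ⟨v₀, c₀, rfl, hc, rfl⟩ :=
      exists_embW_of_embW_eq_mul (x := v) (y := FreeMonoid.ofList c)
        (FreeMonoid.toList.injective hs)
    obtain ⟨c₁, u₀, hc₁, rfl, rfl⟩ :=
      exists_embW_of_embW_eq_mul (x := FreeMonoid.ofList c) (FreeMonoid.toList.injective ht)
    obtain rfl := embW_injective (hc₁.symm.trans hc)
    exact ⟨u₀, v₀, rfl, rfl, mul_assoc _ _ _⟩

/-- A bracket-free word contains no bracket, so it only arises from a context without one. -/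
theorem exists_embW_of_subst_eq_embW {q : OpCtx Z} {x : OpMonoid Z} {w : FreeMonoid Z}
    (h : q.subst x = embW w) :
    ∃ a m b : FreeMonoid Z, q = .hole (embW a) (embW b) ∧ x = embW m ∧ w = a * m * b := by
  cases q with
  | hole u v =>
    obtain ⟨a', b, hab, rfl, rfl⟩ := exists_embW_of_embW_eq_mul h.symm
    obtain ⟨a, m, rfl, rfl, rfl⟩ := exists_embW_of_embW_eq_mul hab.symm
    exact ⟨a, m, b, rfl, rfl, rfl⟩
  | floor u q v =>
    have hmem : OpLetter.floor (FreeMonoid.toList (q.subst x)) ∈ FreeMonoid.toList (embW w) := by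
      rw [← h]
      simp [OpCtx.subst]
    simp [toList_embW] at hmem

end Words

open MonoidAlgebra

section LeadingMonomial

variable {k G H : Type*} [Field k] [Monoid G] [Monoid H] [LinearOrder G] [LinearOrder H]
  {φ : G →* H}

theorem lm_mapDomain (hφ : StrictMono φ) (f : MonoidAlgebra k G) :
    lm (mapDomain φ f) = φ (lm f) := by
  have hsupp : (mapDomain φ f).coeff.support = f.coeff.support.image φ :=
    Finsupp.mapDomain_support_of_injective hφ.injective f.coeff
  by_cases hf : f.coeff.support.Nonempty
  · simp only [lm, dif_pos hf, hsupp, dif_pos (hf.image φ), Finset.max'_image hφ.monotone]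
  · have hf' : ¬ (mapDomain φ f).coeff.support.Nonempty := by
      rwa [hsupp, Finset.image_nonempty]
    simp only [lm, dif_neg hf, dif_neg hf', map_one]

theorem monicize_mapDomain (hφ : StrictMono φ) (f : MonoidAlgebra k G) :
    monicize (mapDomain φ f) = mapDomain φ (monicize f) := by
  have hcoeff : (mapDomain φ f).coeff (φ (lm f)) = f.coeff (lm f) :=
    Finsupp.mapDomain_apply hφ.injective f.coeff (lm f)
  rw [monicize, monicize, lm_mapDomain hφ, hcoeff]
  exact (map_smul (mapDomainAlgHom k k φ) _ f).symm

end LeadingMonomial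

theorem ctxPoly_hole (k : Type*) [Field k] {Z : Type*} (a b : OpMonoid Z) (F : kOpM k Z) :
    ctxPoly k (.hole a b) F = single a 1 * F * single b 1 := by
  induction F using MonoidAlgebra.induction_linear with
  | zero => simp [ctxPoly]
  | add f g hf hg =>
    simp only [ctxPoly] at *
    rw [coeff_add, Finsupp.mapDomain_add, ofCoeff_add, hf, hg, mul_add, add_mul]
  | single x c => simp [ctxPoly, OpCtx.subst]

section Embedding

variable (k : Type*) [Field k] {Z : Type*}

theorem embA_mul (f g : kM k Z) : embA k (f * g) = embA k f * embA k g :=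
  map_mul (mapDomainAlgHom k k embHom) f g

theorem embA_sub (f g : kM k Z) : embA k (f - g) = embA k f - embA k g :=
  map_sub (mapDomainAlgHom k k embHom) f g

theorem embA_single (u : FreeMonoid Z) (c : k) : embA k (single u c) = single (embW u) c :=
  mapDomain_single

variable {k} [LinearOrder (OpMonoid Z)] [LinearOrder (FreeMonoid Z)]
  (hemb : StrictMono (embW (Z := Z)))
include hemb

theorem lm_embA (f : kM k Z) : lm (embA k f) = embW (lm f) :=
  lm_mapDomain (φ := embHom) hemb f

theorem monicize_embA (f : kM k Z) : monicize (embA k f) = embA k (monicize f) :=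
  monicize_mapDomain (φ := embHom) hemb f

theorem ATrivialMod.trivialMod_embA {G : Set (kM k Z)} {w : FreeMonoid Z} {f : kM k Z}
    (h : ATrivialMod k G w f) : TrivialMod k (embA k '' G) (embW w) (embA k f) := by
  have hmap := Submodule.mem_map_of_mem (f := (mapDomainAlgHom k k embHom).toLinearMap) h
  rw [Submodule.map_span] at hmap
  refine Submodule.span_mono ?_ hmap
  rintro _ ⟨_, ⟨s, hs, u, v, rfl, hlt⟩, rfl⟩
  refine ⟨embA k s, ⟨s, hs, rfl⟩, .hole (embW u) (embW v), ?_, ?_⟩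
  · show embA k (single u 1 * s * single v 1) = _
    rw [ctxPoly_hole, embA_mul, embA_mul, embA_single, embA_single]
  · show embW u * lm (embA k s) * embW v < embW w
    rw [lm_embA hemb, ← embW_mul, ← embW_mul]
    exact hemb hlt

variable {G : Set (kM k Z)} (hG : IsAssocGS k G) {f g : kM k Z} (hf : f ∈ G) (hg : g ∈ G)
include hG hf hg

theorem IsAssocGS.intersection_embA {u v w : OpMonoid Z}
    (hwu : w = lm (embA k f) * u) (hwv : w = v * lm (embA k g))
    (hmax : max (OpMonoid.breadth (lm (embA k f))) (OpMonoid.breadth (lm (embA k g))) <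
      OpMonoid.breadth w)
    (hlt : OpMonoid.breadth w <
      OpMonoid.breadth (lm (embA k f)) + OpMonoid.breadth (lm (embA k g))) :
    TrivialMod k (embA k '' G) w
      (monicize (embA k f) * single u 1 - single v 1 * monicize (embA k g)) := by
  simp only [lm_embA hemb] at hwu hwv hmax hlt
  obtain ⟨u₀, v₀, rfl, rfl, hw⟩ := exists_embW_of_overlap (hwu.symm.trans hwv) (hwv ▸ hlt)
  subst hwu
  rw [← embW_mul] at hmax hlt ⊢
  simp only [breadth_embW] at hmax hlt
  convert (hG.1 f hf g hg u₀ v₀ _ rfl hw hmax hlt).trivialMod_embA hemb using 1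
  simp only [monicize_embA hemb, embA_sub, embA_mul, embA_single]

theorem IsAssocGS.inclusion_embA {q : OpCtx Z} {w : OpMonoid Z}
    (hwf : w = lm (embA k f)) (hwg : w = q.subst (lm (embA k g))) :
    TrivialMod k (embA k '' G) w (monicize (embA k f) - ctxPoly k q (monicize (embA k g))) := by
  simp only [lm_embA hemb] at hwf hwg
  subst hwf
  obtain ⟨a, m, b, rfl, hm, hfab⟩ := exists_embW_of_subst_eq_embW hwg.symm
  obtain rfl := embW_injective hm
  convert (hG.2 f hf g hg a b _ rfl hfab).trivialMod_embA hemb using 1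
  simp only [monicize_embA hemb, embA_sub, embA_mul, embA_single, ctxPoly_hole]

end Embedding

end OpAlg

open OpAlg in
/-- Let `≤` be a monomial order on `𝔐(Z)` whose restriction to the free
monoid `M(Z) ⊆ 𝔐(Z)` is a (monomial) order on `M(Z)`. If `G ⊆ kM(Z)` is a classical
Gröbner–Shirshov basis with respect to the restriction of `≤`, then `G` is also an operated
Gröbner–Shirshov basis in `k𝔐(Z)` with respect to `≤`. -/
theorem assocGS_is_opGS
    (k : Type*) [Field k] (Z : Type*)
    [LinearOrder (OpMonoid Z)] [LinearOrder (FreeMonoid Z)]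
    -- `≤` is a monomial order on `𝔐(Z)`:
    (hwf : WellFounded ((· < ·) : OpMonoid Z → OpMonoid Z → Prop))
    (hmono : ∀ u v : OpMonoid Z, u < v → ∀ q : OpCtx Z, q.subst u < q.subst v)
    -- the order on `M(Z)` is the restriction of `≤` along `M(Z) ⊆ 𝔐(Z)`:
    (hres : ∀ a b : FreeMonoid Z, a ≤ b ↔ embW a ≤ embW b)
    (G : Set (kM k Z)) (hG : IsAssocGS k G) :
    IsOpGS k (embA k '' G) := by
  have hemb : StrictMono (embW (Z := Z)) := strictMono_of_le_iff_le hres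
  refine ⟨?_, ?_⟩
  · rintro _ ⟨f, hf, rfl⟩ _ ⟨g, hg, rfl⟩ u v w hwu hwv hmax hlt
    exact hG.intersection_embA hemb hf hg hwu hwv hmax hlt
  · rintro _ ⟨f, hf, rfl⟩ _ ⟨g, hg, rfl⟩ q w hwf hwg
    exact hG.inclusion_embA hemb hf hg hwf hwg
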